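/- For every subset J ⊆ {1,…,l}, the set T_J = ⋃_{w ∈ W_J} w(D) is a convex cone in ℝ^l. -/

import Mathlib

/-!
A point `z` lies in `T_J` exactly when (i) only finitely many positive roots of `W_J` are
negative on `z`, and (ii) `z` is nonnegative on every root `w e_i` with `w ∈ W_J`, `i ∉ J`.
Both conditions are stable under nonnegative linear combinations, which gives the theorem.

The key input is that every root `w e_s` is either nonnegative or nonpositive. Since all
`m_ij = ∞`, the only relations are `σ_t σ_t = 1`, so `w` can be written as a word without repeated
adjacent letters, and along such a word `b_ij ≥ 2` forces the coordinates to stay nonnegative.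
Consequently a reflection `σ_s`, `s ∈ J`, permutes the positive roots of `W_J` other than `e_s`.
This propagates (i) and (ii) from `D` to `T_J`; conversely a point satisfying them is moved into `D`
by reflecting in walls it lies on the wrong side of, each step lowering the number of negative
roots.
-/

open Matrix Finset

/-- The Gram matrix `B` with `B i i = 1` and `B i k = -(b i k)/2` for `i ≠ k`. -/
noncomputable def gramB (l : ℕ) (b : Fin l → Fin l → ℝ) : Matrix (Fin l) (Fin l) ℝ :=
  fun i k => if i = k then 1 else -(b i k) / 2

/-- The bilinear form `⟨v, w⟩_B = vᵀ B w`. -/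
noncomputable def bform (l : ℕ) (b : Fin l → Fin l → ℝ) (v w : Fin l → ℝ) : ℝ :=
  dotProduct v ((gramB l b).mulVec w)

/-- The matrix `M j` of the reflection `σ j (w) = w - 2⟨w, e j⟩_B e j`: it agrees with
the identity except in row `j`, where `(M j) j j = -1` and `(M j) j k = b j k` for `k ≠ j`. -/
noncomputable def reflM (l : ℕ) (b : Fin l → Fin l → ℝ) (j : Fin l) :
    Matrix (Fin l) (Fin l) ℝ :=
  fun r c => if r = j then (if c = j then -1 else b j c) else (if r = c then 1 else 0)

/-- The subgroup `W_J` generated by the reflections `σ j`, `j ∈ J` (since each `σ j` is an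
involution, it coincides with the submonoid generated by them). -/
noncomputable def WJ (l : ℕ) (b : Fin l → Fin l → ℝ) (J : Set (Fin l)) :
    Submonoid (Matrix (Fin l) (Fin l) ℝ) :=
  Submonoid.closure (reflM l b '' J)

/-- The fundamental chamber `D = {x : ⟨x, e i⟩_B ≥ 0 for all i}`. -/
noncomputable def chamberD (l : ℕ) (b : Fin l → Fin l → ℝ) : Set (Fin l → ℝ) :=
  {x | ∀ i : Fin l, 0 ≤ bform l b x (Pi.single i 1)}

/-- The cone `T_J = ⋃_{w ∈ W_J} w(D)`. -/
noncomputable def TJ (l : ℕ) (b : Fin l → Fin l → ℝ) (J : Set (Fin l)) : Set (Fin l → ℝ) :=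
  {y | ∃ w ∈ WJ l b J, ∃ x ∈ chamberD l b, y = w.mulVec x}

variable {l : ℕ} {b : Fin l → Fin l → ℝ}

section BilinearForm

@[simp] lemma bform_add_left (u v w : Fin l → ℝ) :
    bform l b (u + v) w = bform l b u w + bform l b v w := by
  simp [bform, add_dotProduct]

@[simp] lemma bform_sub_left (u v w : Fin l → ℝ) :
    bform l b (u - v) w = bform l b u w - bform l b v w := by
  simp [bform, sub_dotProduct]

@[simp] lemma bform_smul_left (c : ℝ) (v w : Fin l → ℝ) :
    bform l b (c • v) w = c * bform l b v w := by
  simp [bform]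

@[simp] lemma bform_sub_right (u v w : Fin l → ℝ) :
    bform l b u (v - w) = bform l b u v - bform l b u w := by
  simp [bform, mulVec_sub, dotProduct_sub]

@[simp] lemma bform_smul_right (c : ℝ) (v w : Fin l → ℝ) :
    bform l b v (c • w) = c * bform l b v w := by
  simp [bform, mulVec_smul]

@[simp] lemma bform_neg_right (v w : Fin l → ℝ) : bform l b v (-w) = -bform l b v w := by
  simp [bform, mulVec_neg]

@[simp] lemma bform_single_single_self (j : Fin l) :
    bform l b (Pi.single j 1) (Pi.single j 1) = 1 := by
  simp [bform, mulVec_single, gramB]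

lemma gramB_transpose (hsym : ∀ i j, i ≠ j → b i j = b j i) : (gramB l b)ᵀ = gramB l b := by
  ext i k
  by_cases h : i = k
  · simp [h]
  · simp [gramB, h, Ne.symm h, hsym k i (Ne.symm h)]

lemma bform_comm (hsym : ∀ i j, i ≠ j → b i j = b j i) (v w : Fin l → ℝ) :
    bform l b v w = bform l b w v := by
  rw [bform, bform, dotProduct_mulVec, ← mulVec_transpose, gramB_transpose hsym, dotProduct_comm]

lemma bform_nonneg_of_mem_chamberD {x v : Fin l → ℝ} (hx : x ∈ chamberD l b) (hv : 0 ≤ v) :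
    0 ≤ bform l b x v := by
  have hx' : 0 ≤ x ᵥ* gramB l b := fun k => by
    simpa only [bform, dotProduct_mulVec, dotProduct_single, mul_one, Pi.zero_apply] using hx k
  rw [bform, dotProduct_mulVec]
  exact dotProduct_nonneg_of_nonneg hx' hv

end BilinearForm

section Reflections

/-- Row `j` of `reflM l b j` is row `j` of `1 - 2 • gramB l b`. -/
lemma reflM_mulVec (j : Fin l) (v : Fin l → ℝ) :
    reflM l b j *ᵥ v = v - (2 * bform l b (Pi.single j 1) v) • Pi.single j 1 := by
  ext r
  by_cases h : r = j
  · subst h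
    have hrow : ∀ c, (if c = r then -1 else b r c) * v c
        = (if r = c then 1 else 0) * v c - 2 * ((if r = c then 1 else -b r c / 2) * v c) := by
      intro c
      by_cases hc : c = r
      · subst hc; simp; ring
      · simp [hc, Ne.symm hc]; ring
    simp only [mulVec, dotProduct, reflM, if_true, Finset.sum_congr rfl fun c _ => hrow c,
      Finset.sum_sub_distrib, ← Finset.mul_sum]
    rw [bform, single_dotProduct, one_mul]
    simp [gramB, dotProduct, mulVec]
  · simp [mulVec, dotProduct, reflM, h]

lemma reflM_mulVec_apply_of_ne {j r : Fin l} (h : r ≠ j) (v : Fin l → ℝ) :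
    (reflM l b j *ᵥ v) r = v r := by
  simp [reflM_mulVec, h]

lemma reflM_mulVec_apply_self (j : Fin l) (v : Fin l → ℝ) :
    (reflM l b j *ᵥ v) j = -v j + ∑ k ∈ Finset.univ.erase j, b j k * v k := by
  rw [mulVec, dotProduct, ← Finset.add_sum_erase _ _ (Finset.mem_univ j)]
  simp only [reflM, if_true]
  rw [Finset.sum_congr rfl fun k hk => by rw [if_neg (Finset.ne_of_mem_erase hk)]]
  ring

@[simp] lemma reflM_mulVec_single_self (j : Fin l) :
    reflM l b j *ᵥ Pi.single j 1 = -Pi.single j 1 := by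
  rw [reflM_mulVec, bform_single_single_self]
  module

@[simp] lemma reflM_mulVec_reflM_mulVec (j : Fin l) (v : Fin l → ℝ) :
    reflM l b j *ᵥ (reflM l b j *ᵥ v) = v := by
  rw [reflM_mulVec j (reflM l b j *ᵥ v), reflM_mulVec j v]
  simp only [bform_sub_right, bform_smul_right, bform_single_single_self]
  module

lemma bform_reflM_mulVec_left (hsym : ∀ i j, i ≠ j → b i j = b j i) (j : Fin l)
    (v w : Fin l → ℝ) : bform l b (reflM l b j *ᵥ v) w = bform l b v (reflM l b j *ᵥ w) := by
  simp only [reflM_mulVec, bform_sub_left, bform_smul_left, bform_sub_right, bform_smul_right,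
    bform_comm hsym v (Pi.single j 1)]
  ring

end Reflections

section WeylGroup

variable {J : Set (Fin l)}

lemma reflM_mul_mem_WJ {s : Fin l} (hs : s ∈ J) {w : Matrix (Fin l) (Fin l) ℝ}
    (hw : w ∈ WJ l b J) : reflM l b s * w ∈ WJ l b J :=
  mul_mem (Submonoid.subset_closure ⟨s, hs, rfl⟩) hw

@[elab_as_elim]
lemma WJ_induction {p : (w : Matrix (Fin l) (Fin l) ℝ) → w ∈ WJ l b J → Prop}
    (one : p 1 (one_mem _))
    (reflM_mul : ∀ s (hs : s ∈ J) w (hw : w ∈ WJ l b J), p w hw →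
      p (reflM l b s * w) (reflM_mul_mem_WJ hs hw))
    {w : Matrix (Fin l) (Fin l) ℝ} (hw : w ∈ WJ l b J) : p w hw := by
  induction hw using Submonoid.closure_induction_left with
  | one => exact one
  | mul_left _ hx w hw ih =>
    obtain ⟨s, hs, rfl⟩ := hx
    exact reflM_mul s hs w hw ih

lemma bform_mulVec_mulVec_of_mem_WJ (hsym : ∀ i j, i ≠ j → b i j = b j i)
    {w : Matrix (Fin l) (Fin l) ℝ} (hw : w ∈ WJ l b J) (v : Fin l → ℝ) :
    bform l b (w *ᵥ v) (w *ᵥ v) = bform l b v v := by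
  induction hw using WJ_induction with
  | one => rw [one_mulVec]
  | reflM_mul s _ w _ ih =>
    rw [← mulVec_mulVec, bform_reflM_mulVec_left hsym, reflM_mulVec_reflM_mulVec, ih]

lemma mulVec_single_apply_self_of_mem_WJ {w : Matrix (Fin l) (Fin l) ℝ} (hw : w ∈ WJ l b J)
    {i : Fin l} (hi : i ∉ J) : (w *ᵥ Pi.single i 1) i = 1 := by
  induction hw using WJ_induction with
  | one => simp
  | reflM_mul s hs w _ ih =>
    rw [← mulVec_mulVec, reflM_mulVec_apply_of_ne (ne_of_mem_of_not_mem hs hi).symm, ih]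

end WeylGroup

section ReducedWords

noncomputable def wordMat (l : ℕ) (b : Fin l → Fin l → ℝ) (R : List (Fin l)) :
    Matrix (Fin l) (Fin l) ℝ :=
  (R.map (reflM l b)).prod

@[simp] lemma wordMat_nil : wordMat l b [] = 1 := rfl

@[simp] lemma wordMat_cons (t : Fin l) (R : List (Fin l)) :
    wordMat l b (t :: R) = reflM l b t * wordMat l b R := by
  simp [wordMat]

lemma le_reflM_mulVec_apply_self (hge : ∀ i j, i ≠ j → 2 ≤ b i j) {v : Fin l → ℝ} (hv : 0 ≤ v)
    {t c : Fin l} (htc : t ≠ c) (hle : v t ≤ v c) : v c ≤ (reflM l b t *ᵥ v) t := by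
  have hsum : b t c * v c ≤ ∑ k ∈ Finset.univ.erase t, b t k * v k :=
    Finset.single_le_sum (f := fun k => b t k * v k)
      (fun k hk => mul_nonneg (by linarith [hge t k (Finset.ne_of_mem_erase hk).symm]) (hv k))
      (Finset.mem_erase.mpr ⟨htc.symm, Finset.mem_univ c⟩)
  have htwo : 2 * v c ≤ b t c * v c := mul_le_mul_of_nonneg_right (hge t c htc) (hv c)
  rw [reflM_mulVec_apply_self]
  linarith

/-- `(R ++ [s]).IsChain (· ≠ ·)` says that the word `R` is reduced and does not end in `s`. -/
lemma wordMat_mulVec_single_nonneg_and_le_headD (hge : ∀ i j, i ≠ j → 2 ≤ b i j) (s : Fin l) :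
    ∀ R : List (Fin l), (R ++ [s]).IsChain (· ≠ ·) →
      0 ≤ wordMat l b R *ᵥ Pi.single s 1 ∧
        ∀ k, (wordMat l b R *ᵥ Pi.single s 1) k ≤ (wordMat l b R *ᵥ Pi.single s 1) (R.headD s)
  | [], _ => by
    refine ⟨fun k => ?_, fun k => ?_⟩ <;> by_cases hk : k = s <;> simp [hk]
  | t :: R, hchain => by
    rw [List.cons_append, List.isChain_cons] at hchain
    obtain ⟨hv, hmax⟩ := wordMat_mulVec_single_nonneg_and_le_headD hge s R hchain.2
    have hkey := le_reflM_mulVec_apply_self hge hv (hchain.1 _ (by simp)) (hmax t)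
    simp only [wordMat_cons, ← mulVec_mulVec, List.headD_cons]
    refine ⟨fun k => ?_, fun k => ?_⟩ <;> by_cases hk : k = t
    · rw [hk]; exact (hv (R.headD s)).trans hkey
    · exact (reflM_mulVec_apply_of_ne hk _).symm ▸ hv k
    · rw [hk]
    · exact (reflM_mulVec_apply_of_ne hk _).symm ▸ (hmax k).trans hkey

lemma reflM_mulVec_wordMat_mulVec_single (t s : Fin l) {R : List (Fin l)}
    (hR : (R ++ [s]).IsChain (· ≠ ·)) :
    ∃ R' : List (Fin l), (R' ++ [s]).IsChain (· ≠ ·) ∧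
      (reflM l b t *ᵥ (wordMat l b R *ᵥ Pi.single s 1) = wordMat l b R' *ᵥ Pi.single s 1 ∨
        reflM l b t *ᵥ (wordMat l b R *ᵥ Pi.single s 1) = -(wordMat l b R' *ᵥ Pi.single s 1)) := by
  by_cases htc : t = R.headD s
  · cases R with
    | nil =>
      obtain rfl : t = s := htc
      refine ⟨[], hR, Or.inr ?_⟩
      rw [wordMat_nil, one_mulVec, reflM_mulVec_single_self]
    | cons r R' =>
      obtain rfl : t = r := htc
      refine ⟨R', hR.tail, Or.inl ?_⟩
      rw [wordMat_cons, ← mulVec_mulVec, reflM_mulVec_reflM_mulVec]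
  · refine ⟨t :: R, ?_, Or.inl ?_⟩
    · rw [List.cons_append, List.isChain_cons]
      exact ⟨by simpa using htc, hR⟩
    · rw [wordMat_cons, mulVec_mulVec]

lemma exists_isChain_mulVec_single {J : Set (Fin l)} {w : Matrix (Fin l) (Fin l) ℝ}
    (hw : w ∈ WJ l b J) (s : Fin l) :
    ∃ R : List (Fin l), (R ++ [s]).IsChain (· ≠ ·) ∧
      (w *ᵥ Pi.single s 1 = wordMat l b R *ᵥ Pi.single s 1 ∨
        w *ᵥ Pi.single s 1 = -(wordMat l b R *ᵥ Pi.single s 1)) := by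
  induction hw using WJ_induction with
  | one => exact ⟨[], by simp, Or.inl (by simp)⟩
  | reflM_mul t _ w _ ih =>
    obtain ⟨R, hR, hw⟩ := ih
    obtain ⟨R', hR', ht⟩ := reflM_mulVec_wordMat_mulVec_single (b := b) t s hR
    refine ⟨R', hR', ?_⟩
    rw [← mulVec_mulVec]
    rcases hw with hw | hw <;> rcases ht with ht | ht <;>
      simp only [hw, ht, mulVec_neg, neg_neg, true_or, or_true]

lemma nonneg_or_nonpos_mulVec_single (hge : ∀ i j, i ≠ j → 2 ≤ b i j) {J : Set (Fin l)}
    {w : Matrix (Fin l) (Fin l) ℝ} (hw : w ∈ WJ l b J) (s : Fin l) :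
    0 ≤ w *ᵥ Pi.single s 1 ∨ w *ᵥ Pi.single s 1 ≤ 0 := by
  obtain ⟨R, hR, hw | hw⟩ := exists_isChain_mulVec_single hw s <;> rw [hw]
  · exact Or.inl (wordMat_mulVec_single_nonneg_and_le_headD hge s R hR).1
  · exact Or.inr (neg_nonpos.mpr (wordMat_mulVec_single_nonneg_and_le_headD hge s R hR).1)

end ReducedWords

section Roots

def posRoots (l : ℕ) (b : Fin l → Fin l → ℝ) (J : Set (Fin l)) : Set (Fin l → ℝ) :=
  {α | (∃ w ∈ WJ l b J, ∃ i ∈ J, α = w *ᵥ Pi.single i 1) ∧ 0 ≤ α}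

def negRoots (l : ℕ) (b : Fin l → Fin l → ℝ) (J : Set (Fin l)) (z : Fin l → ℝ) :
    Set (Fin l → ℝ) :=
  {α | α ∈ posRoots l b J ∧ bform l b z α < 0}

def NonnegOnOuterRoots (l : ℕ) (b : Fin l → Fin l → ℝ) (J : Set (Fin l)) (z : Fin l → ℝ) :
    Prop :=
  ∀ w ∈ WJ l b J, ∀ i ∉ J, 0 ≤ bform l b z (w *ᵥ Pi.single i 1)

variable {J : Set (Fin l)} {s : Fin l}

lemma exists_pos_apply_of_ne_single {α : Fin l → ℝ} (hα : 0 ≤ α) (hnorm : bform l b α α = 1)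
    (hne : α ≠ Pi.single s 1) : ∃ k ≠ s, 0 < α k := by
  by_contra! h
  have hα_eq : α = α s • Pi.single s 1 := by
    ext k
    by_cases hk : k = s
    · simp [hk]
    · simp [hk, le_antisymm (h k hk) (hα k)]
  rw [hα_eq, bform_smul_left, bform_smul_right, bform_single_single_self, mul_one] at hnorm
  rcases mul_self_eq_one_iff.1 hnorm with hαs | hαs
  · exact hne (by rw [hα_eq, hαs, one_smul])
  · linarith [show (0 : ℝ) ≤ α s from hα s]

lemma reflM_mulVec_mem_posRoots (hsym : ∀ i j, i ≠ j → b i j = b j i)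
    (hge : ∀ i j, i ≠ j → 2 ≤ b i j) (hs : s ∈ J) {α : Fin l → ℝ} (hα : α ∈ posRoots l b J)
    (hne : α ≠ Pi.single s 1) : reflM l b s *ᵥ α ∈ posRoots l b J := by
  obtain ⟨⟨w, hw, i, hi, rfl⟩, hpos⟩ := hα
  have hsw := reflM_mul_mem_WJ hs hw
  rw [mulVec_mulVec]
  refine ⟨⟨_, hsw, i, hi, rfl⟩, ?_⟩
  have hnorm : bform l b (w *ᵥ Pi.single i 1) (w *ᵥ Pi.single i 1) = 1 := by
    rw [bform_mulVec_mulVec_of_mem_WJ hsym hw, bform_single_single_self]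
  obtain ⟨k, hks, hk⟩ := exists_pos_apply_of_ne_single hpos hnorm hne
  refine (nonneg_or_nonpos_mulVec_single hge hsw i).resolve_right fun h => ?_
  have hk' := h k
  rw [Pi.zero_apply, ← mulVec_mulVec, reflM_mulVec_apply_of_ne hks] at hk'
  linarith

lemma reflM_mulVec_ne_single_of_nonneg {α : Fin l → ℝ} (hα : 0 ≤ α) :
    reflM l b s *ᵥ α ≠ Pi.single s 1 := by
  intro h
  have hαs := hα s
  rw [← reflM_mulVec_reflM_mulVec (b := b) s α, h, reflM_mulVec_single_self] at hαs
  norm_num at hαs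

lemma injective_reflM_mulVec (s : Fin l) : Function.Injective (reflM l b s *ᵥ ·) :=
  Function.LeftInverse.injective (reflM_mulVec_reflM_mulVec s)

lemma mapsTo_reflM_mulVec_negRoots (hsym : ∀ i j, i ≠ j → b i j = b j i)
    (hge : ∀ i j, i ≠ j → 2 ≤ b i j) (hs : s ∈ J) (z : Fin l → ℝ) :
    Set.MapsTo (reflM l b s *ᵥ ·) (negRoots l b J (reflM l b s *ᵥ z) \ {Pi.single s 1})
      (negRoots l b J z \ {Pi.single s 1}) := by
  rintro α ⟨⟨hα, hneg⟩, hne⟩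
  refine ⟨⟨reflM_mulVec_mem_posRoots hsym hge hs hα hne, ?_⟩,
    reflM_mulVec_ne_single_of_nonneg hα.2⟩
  rwa [← bform_reflM_mulVec_left hsym]

lemma finite_negRoots_reflM_mulVec (hsym : ∀ i j, i ≠ j → b i j = b j i)
    (hge : ∀ i j, i ≠ j → 2 ≤ b i j) (hs : s ∈ J) {z : Fin l → ℝ}
    (hz : (negRoots l b J z).Finite) : (negRoots l b J (reflM l b s *ᵥ z)).Finite :=
  (Set.Finite.of_injOn (mapsTo_reflM_mulVec_negRoots hsym hge hs z)
    (injective_reflM_mulVec s).injOn hz.sdiff).of_sdiff (Set.finite_singleton _)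

lemma NonnegOnOuterRoots.reflM_mulVec (hsym : ∀ i j, i ≠ j → b i j = b j i) (hs : s ∈ J)
    {z : Fin l → ℝ} (hz : NonnegOnOuterRoots l b J z) :
    NonnegOnOuterRoots l b J (reflM l b s *ᵥ z) := by
  intro w hw i hi
  rw [bform_reflM_mulVec_left hsym, mulVec_mulVec]
  exact hz _ (reflM_mul_mem_WJ hs hw) i hi

end Roots

section TitsCone

variable {J : Set (Fin l)}

lemma reflM_mulVec_mem_TJ {s : Fin l} (hs : s ∈ J) {z : Fin l → ℝ} (hz : z ∈ TJ l b J) :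
    reflM l b s *ᵥ z ∈ TJ l b J := by
  obtain ⟨w, hw, x, hx, rfl⟩ := hz
  exact ⟨_, reflM_mul_mem_WJ hs hw, x, hx, mulVec_mulVec _ _ _⟩

lemma TJ_induction {p : (Fin l → ℝ) → Prop} (chamber : ∀ x ∈ chamberD l b, p x)
    (reflM_mulVec : ∀ s ∈ J, ∀ z, p z → p (reflM l b s *ᵥ z)) {z : Fin l → ℝ}
    (hz : z ∈ TJ l b J) : p z := by
  obtain ⟨w, hw, x, hx, rfl⟩ := hz
  induction hw using WJ_induction with
  | one => rw [one_mulVec]; exact chamber x hx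
  | reflM_mul s hs w _ ih => rw [← mulVec_mulVec]; exact reflM_mulVec s hs _ ih

lemma negRoots_eq_empty_of_mem_chamberD {x : Fin l → ℝ} (hx : x ∈ chamberD l b) :
    negRoots l b J x = ∅ :=
  Set.eq_empty_of_forall_notMem fun _ hα =>
    (bform_nonneg_of_mem_chamberD hx hα.1.2).not_gt hα.2

lemma nonnegOnOuterRoots_of_mem_chamberD (hge : ∀ i j, i ≠ j → 2 ≤ b i j) {x : Fin l → ℝ}
    (hx : x ∈ chamberD l b) : NonnegOnOuterRoots l b J x := by
  intro w hw i hi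
  refine bform_nonneg_of_mem_chamberD hx
    ((nonneg_or_nonpos_mulVec_single hge hw i).resolve_right fun h => ?_)
  have hii := h i
  rw [mulVec_single_apply_self_of_mem_WJ hw hi] at hii
  norm_num at hii

lemma finite_negRoots_and_nonnegOnOuterRoots_of_mem_TJ (hsym : ∀ i j, i ≠ j → b i j = b j i)
    (hge : ∀ i j, i ≠ j → 2 ≤ b i j) {z : Fin l → ℝ} (hz : z ∈ TJ l b J) :
    (negRoots l b J z).Finite ∧ NonnegOnOuterRoots l b J z :=
  TJ_induction (p := fun z => (negRoots l b J z).Finite ∧ NonnegOnOuterRoots l b J z)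
    (fun _ hx => ⟨negRoots_eq_empty_of_mem_chamberD hx ▸ Set.finite_empty,
      nonnegOnOuterRoots_of_mem_chamberD hge hx⟩)
    (fun _ hs _ hz => ⟨finite_negRoots_reflM_mulVec hsym hge hs hz.1,
      hz.2.reflM_mulVec hsym hs⟩) hz

/-- Descent: if `⟨z, e_s⟩ < 0`, then `s ∈ J`, and `σ_s` maps the negative roots of `σ_s z`
injectively into those of `z` other than `e_s`. -/
lemma mem_TJ_of_finite_negRoots (hsym : ∀ i j, i ≠ j → b i j = b j i)
    (hge : ∀ i j, i ≠ j → 2 ≤ b i j) {z : Fin l → ℝ} (hfin : (negRoots l b J z).Finite)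
    (hout : NonnegOnOuterRoots l b J z) : z ∈ TJ l b J := by
  induction hn : (negRoots l b J z).ncard using Nat.strong_induction_on generalizing z with
  | _ n ih =>
  by_cases hD : z ∈ chamberD l b
  · exact ⟨1, one_mem _, z, hD, (one_mulVec z).symm⟩
  obtain ⟨s, hzs⟩ : ∃ s, bform l b z (Pi.single s 1) < 0 := by simpa [chamberD] using hD
  have hsJ : s ∈ J := by
    by_contra hsJ
    have := hout 1 (one_mem _) s hsJ
    rw [one_mulVec] at this
    linarith
  have hes : Pi.single s 1 ∈ negRoots l b J z :=
    ⟨⟨⟨1, one_mem _, s, hsJ, (one_mulVec _).symm⟩, Pi.single_nonneg.2 zero_le_one⟩, hzs⟩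
  have hes' : Pi.single s 1 ∉ negRoots l b J (reflM l b s *ᵥ z) := fun h => by
    have h' := h.2
    rw [bform_reflM_mulVec_left hsym, reflM_mulVec_single_self, bform_neg_right] at h'
    linarith
  have hmaps := mapsTo_reflM_mulVec_negRoots hsym hge hsJ z
  have hlt : (negRoots l b J (reflM l b s *ᵥ z)).ncard < n :=
    calc _ = (negRoots l b J (reflM l b s *ᵥ z) \ {Pi.single s 1}).ncard := by
          rw [Set.sdiff_singleton_eq_self hes']
      _ ≤ (negRoots l b J z \ {Pi.single s 1}).ncard :=
          Set.ncard_le_ncard_of_injOn _ hmaps (injective_reflM_mulVec s).injOn hfin.sdiff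
      _ < n := hn ▸ Set.ncard_sdiff_singleton_lt_of_mem hes hfin
  have hsz := reflM_mulVec_mem_TJ hsJ (ih _ hlt (finite_negRoots_reflM_mulVec hsym hge hsJ hfin)
    (hout.reflM_mulVec hsym hsJ) rfl)
  rwa [reflM_mulVec_reflM_mulVec] at hsz

end TitsCone

section Convexity

variable {J : Set (Fin l)} {a c : ℝ} {x y : Fin l → ℝ}

lemma negRoots_smul_add_smul_subset (ha : 0 ≤ a) (hc : 0 ≤ c) :
    negRoots l b J (a • x + c • y) ⊆ negRoots l b J x ∪ negRoots l b J y := by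
  rintro α ⟨hα, hneg⟩
  by_contra h
  simp only [negRoots, Set.mem_union, Set.mem_ofPred_eq, not_or, not_and, not_lt] at h
  rw [bform_add_left, bform_smul_left, bform_smul_left] at hneg
  nlinarith [mul_nonneg ha (h.1 hα), mul_nonneg hc (h.2 hα)]

lemma NonnegOnOuterRoots.smul_add_smul (ha : 0 ≤ a) (hc : 0 ≤ c)
    (hx : NonnegOnOuterRoots l b J x) (hy : NonnegOnOuterRoots l b J y) :
    NonnegOnOuterRoots l b J (a • x + c • y) := fun w hw i hi => by
  rw [bform_add_left, bform_smul_left, bform_smul_left]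
  exact add_nonneg (mul_nonneg ha (hx w hw i hi)) (mul_nonneg hc (hy w hw i hi))

lemma smul_add_smul_mem_TJ (hsym : ∀ i j, i ≠ j → b i j = b j i)
    (hge : ∀ i j, i ≠ j → 2 ≤ b i j) (ha : 0 ≤ a) (hc : 0 ≤ c) (hx : x ∈ TJ l b J)
    (hy : y ∈ TJ l b J) : a • x + c • y ∈ TJ l b J := by
  obtain ⟨hx_fin, hx_out⟩ := finite_negRoots_and_nonnegOnOuterRoots_of_mem_TJ hsym hge hx
  obtain ⟨hy_fin, hy_out⟩ := finite_negRoots_and_nonnegOnOuterRoots_of_mem_TJ hsym hge hy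
  exact mem_TJ_of_finite_negRoots hsym hge
    ((hx_fin.union hy_fin).subset (negRoots_smul_add_smul_subset ha hc))
    (hx_out.smul_add_smul ha hc hy_out)

end Convexity

theorem TJ_convexCone_general (l : ℕ) (b : Fin l → Fin l → ℝ)
    (hsym : ∀ i j, i ≠ j → b i j = b j i) (hge : ∀ i j, i ≠ j → 2 ≤ b i j)
    (J : Set (Fin l)) :
    Convex ℝ (TJ l b J) ∧ (∀ c : ℝ, 0 ≤ c → ∀ x ∈ TJ l b J, c • x ∈ TJ l b J) :=
  ⟨fun _ hx _ hy _ _ ha hc _ => smul_add_smul_mem_TJ hsym hge ha hc hx hy,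
    fun _ hc _ hx => by simpa using smul_add_smul_mem_TJ hsym hge hc le_rfl hx hx⟩

/-- **`T_J` is a convex cone**: it is convex and stable under nonnegative scaling. -/
theorem TJ_convexCone (l : ℕ) (hl : 2 ≤ l) (b : Fin l → Fin l → ℝ)
    (hsym : ∀ i j, i ≠ j → b i j = b j i) (hge : ∀ i j, i ≠ j → 2 ≤ b i j)
    (J : Set (Fin l)) :
    Convex ℝ (TJ l b J) ∧ (∀ c : ℝ, 0 ≤ c → ∀ x ∈ TJ l b J, c • x ∈ TJ l b J) :=
  TJ_convexCone_general l b hsym hge J
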